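/- arXiv:0901.0880 — 2 statements merged into one kernel-verified Lean document; each statement's English description precedes it below -/
import Mathlib

section
/- Let (Γ, ⪯) be a left-ordered group and let (f, g, u, v, w) be a crossing for (Γ, ⪯). If f u ≻ u (resp. f u ≺ u), then (f, g, f^n u, v, w) (resp. (f, g, f^{-n} u, v, w)) is also a crossing for every positive integer n. Analogously, if g v ≺ v (resp. g v ≻ v), then (f, g, u, g^n v, w) (resp. (f, g, u, g^{-n} v, w)) is also a crossing for every positive integer n. -/
/-!
Translating `u` by `f` moves it along its `f`-orbit, which is monotone in a left-ordered group,
so it stays above `u` when `f u ≻ u`; it stays below `w` because `fᴺ v ≺ w ≺ v` forces `f w ≺ w`.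
Translating by `f⁻ⁿ` when `f u ≺ u` keeps it below `w` because `u ≺ fⁿ⁺ᴺ v`. The statements about
`v` are the statements about `u` in the reversed order, where `(g, f, v, u, w)` is a crossing.
-/

/-- A crossing for a left-ordered group `(Γ, ≤)`. -/
def IsCrossing {Γ : Type*} [Group Γ] [LinearOrder Γ] (f g u v w : Γ) : Prop :=
  u < w ∧ w < v ∧
  (∀ n : ℕ, 0 < n → g ^ n * u < v ∧ u < f ^ n * v) ∧
  ∃ M N : ℕ, 0 < M ∧ 0 < N ∧ f ^ N * v < w ∧ w < g ^ M * u

section LeftOrderedGroup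

variable {Γ : Type*} [Group Γ] [LinearOrder Γ] {f g u v w : Γ}

theorem isCrossing_toDual_iff :
    IsCrossing (OrderDual.toDual g) (OrderDual.toDual f) (OrderDual.toDual v)
      (OrderDual.toDual u) (OrderDual.toDual w) ↔ IsCrossing f g u v w := by
  constructor <;>
  · rintro ⟨huw, hwv, hpow, M, N, hM, hN, hvw, hwu⟩
    exact ⟨hwv, huw, fun n hn => (hpow n hn).symm, N, M, hN, hM, hwu, hvw⟩

theorem IsCrossing.lt_pow_mul (h : IsCrossing f g u v w) {k : ℕ} (hk : 0 < k) :
    u < f ^ k * v :=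
  (h.2.2.1 k hk).2

variable [MulLeftMono Γ]

theorem le_pow_mul_of_le_mul {x : Γ} (h : x ≤ f * x) (n : ℕ) : x ≤ f ^ n * x := by
  induction n with
  | zero => simp
  | succ n ih =>
    calc x ≤ f ^ n * x := ih
      _ ≤ f ^ n * (f * x) := mul_le_mul_right h _
      _ = f ^ (n + 1) * x := by rw [pow_succ, mul_assoc]

theorem pow_mul_le_of_mul_le {x : Γ} (h : f * x ≤ x) (n : ℕ) : f ^ n * x ≤ x :=
  le_pow_mul_of_le_mul (Γ := Γᵒᵈ) h n

theorem mul_lt_of_pow_mul_lt {x : Γ} {n : ℕ} (h : f ^ n * x < x) : f * x < x := by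
  contrapose! h
  exact le_pow_mul_of_le_mul h n

theorem pow_mul_lt_pow_mul {a b : Γ} (hab : ∀ j : ℕ, f ^ j * a < b)
    (hba : ∀ k : ℕ, 0 < k → a < f ^ k * b) (m : ℕ) {n : ℕ} (hn : 0 < n) :
    f ^ m * a < f ^ n * b := by
  rcases le_or_gt n m with hnm | hmn
  · obtain ⟨j, rfl⟩ := Nat.exists_eq_add_of_le hnm
    rw [pow_add, mul_assoc]
    exact mul_lt_mul_right (hab j) _
  · obtain ⟨k, rfl⟩ := Nat.exists_eq_add_of_lt hmn
    rw [add_assoc, pow_add, mul_assoc]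
    exact mul_lt_mul_right (hba _ k.succ_pos) _

namespace IsCrossing

theorem pow_mul_lt (h : IsCrossing f g u v w) (k : ℕ) : g ^ k * w < v := by
  obtain ⟨-, hwv, hpow, M, -, hM, -, -, hwu⟩ := h
  rcases k.eq_zero_or_pos with rfl | hk
  · simpa using hwv
  calc g ^ k * w < g ^ k * (g ^ M * u) := mul_lt_mul_right hwu _
    _ = g ^ (k + M) * u := by rw [pow_add, mul_assoc]
    _ < v := (hpow _ (by omega)).1

theorem mul_lt_self (h : IsCrossing f g u v w) : f * w < w := by
  obtain ⟨-, hwv, -, -, N, -, -, hvw, -⟩ := h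
  exact mul_lt_of_pow_mul_lt ((mul_lt_mul_right hwv _).trans hvw)

theorem of_le_of_lt (h : IsCrossing f g u v w) {u' : Γ} (hu : u ≤ u') (hw : u' < w)
    (hf : ∀ k : ℕ, 0 < k → u' < f ^ k * v) : IsCrossing f g u' v w := by
  have hgw := h.pow_mul_lt
  obtain ⟨-, hwv, -, M, N, hM, hN, hvw, hwu⟩ := h
  refine ⟨hw, hwv, fun k hk => ⟨?_, hf k hk⟩, M, N, hM, hN, hvw, ?_⟩
  · exact (mul_lt_mul_right hw _).trans (hgw k)
  · exact hwu.trans_le (mul_le_mul_right hu _)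

theorem pow_mul (h : IsCrossing f g u v w) (hu : u ≤ f * u) (n : ℕ) :
    IsCrossing f g (f ^ n * u) v w := by
  have hw : ∀ j : ℕ, f ^ j * u < w := fun j =>
    calc f ^ j * u < f ^ j * w := mul_lt_mul_right h.1 _
      _ ≤ w := pow_mul_le_of_mul_le h.mul_lt_self.le j
  refine h.of_le_of_lt (le_pow_mul_of_le_mul hu n) (hw n) fun k hk => ?_
  exact pow_mul_lt_pow_mul (fun j => (hw j).trans h.2.1) (fun _ => h.lt_pow_mul) n hk

theorem inv_pow_mul (h : IsCrossing f g u v w) (hu : f * u ≤ u) (n : ℕ) :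
    IsCrossing f g ((f ^ n)⁻¹ * u) v w := by
  have hf : ∀ k : ℕ, 0 < k → (f ^ n)⁻¹ * u < f ^ k * v := fun k hk => by
    rw [inv_mul_lt_iff_lt_mul, ← mul_assoc, ← pow_add]
    exact h.lt_pow_mul (by omega)
  obtain ⟨-, N, -, hN, hvw, -⟩ := h.2.2.2
  exact h.of_le_of_lt (le_inv_mul_iff_mul_le.2 (pow_mul_le_of_mul_le hu n))
    ((hf N hN).trans hvw) hf

end IsCrossing

end LeftOrderedGroup

/-- Let `(f, g, u, v, w)` be a crossing. If `f u > u` (resp. `f u < u`), then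
`(f, g, fⁿ u, v, w)` (resp. `(f, g, f⁻ⁿ u, v, w)`) is also a crossing for every
positive integer `n`. Analogously, if `g v < v` (resp. `g v > v`), then
`(f, g, u, gⁿ v, w)` (resp. `(f, g, u, g⁻ⁿ v, w)`) is also a crossing for every
positive integer `n`. -/
theorem crossing_translate_u_v {Γ : Type*} [Group Γ] [LinearOrder Γ]
    [CovariantClass Γ Γ (· * ·) (· ≤ ·)] (f g u v w : Γ)
    (h : IsCrossing f g u v w) :
    (u < f * u → ∀ n : ℕ, 0 < n → IsCrossing f g (f ^ n * u) v w) ∧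
    (f * u < u → ∀ n : ℕ, 0 < n → IsCrossing f g (f ^ (-(n : ℤ)) * u) v w) ∧
    (g * v < v → ∀ n : ℕ, 0 < n → IsCrossing f g u (g ^ n * v) w) ∧
    (v < g * v → ∀ n : ℕ, 0 < n → IsCrossing f g u (g ^ (-(n : ℤ)) * v) w) := by
  have hdual := isCrossing_toDual_iff.2 h
  refine ⟨fun hu n _ => h.pow_mul hu.le n, fun hu n _ => ?_, fun hv n _ => ?_, fun hv n _ => ?_⟩
  · rw [zpow_neg, zpow_natCast]
    exact h.inv_pow_mul hu.le n
  · exact isCrossing_toDual_iff.1 (hdual.pow_mul hv.le n)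
  · rw [zpow_neg, zpow_natCast]
    exact isCrossing_toDual_iff.1 (hdual.inv_pow_mul hv.le n)
end

section
/- Let (Γ, ⪯) be a left-ordered group with ⪯ not Conradian, and let C be the Conradian soul of (Γ, ⪯). Then for every finite family F of ⪯-positive elements of Γ there exist h ∈ Γ and an element h̄ ≻ 1 with h̄ ∉ C such that: 1 ≺ h⁻¹ f h and h⁻¹ f h ∉ C for every f ∈ F \ C, while h⁻¹ h̄ h ≺ 1 and h⁻¹ h̄ h ∉ C. -/
/-- The ordering of a left-ordered group is Conradian. -/
def IsConradian (Γ : Type*) [Group Γ] [LinearOrder Γ] : Prop :=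
  ∀ f g : Γ, 1 < f → 1 < g → ∃ n : ℕ, 0 < n ∧ g < f * g ^ n

/-- A subgroup `C` of a left-ordered group is `≤`-convex. -/
def IsConvexSubgroup {Γ : Type*} [Group Γ] [LinearOrder Γ] (C : Subgroup Γ) : Prop :=
  ∀ c₁ ∈ C, ∀ c₂ ∈ C, ∀ f : Γ, c₁ < f → f < c₂ → f ∈ C

/-- The restriction of the ordering to a subgroup `C` is Conradian. -/
def IsConradianOn {Γ : Type*} [Group Γ] [LinearOrder Γ] (C : Subgroup Γ) : Prop :=
  ∀ f ∈ C, ∀ g ∈ C, 1 < f → 1 < g → ∃ n : ℕ, 0 < n ∧ g < f * g ^ n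

/-- `C` is the Conradian soul: convex, Conradian, containing every convex subgroup
with Conradian restricted ordering. -/
def IsConradianSoul {Γ : Type*} [Group Γ] [LinearOrder Γ] (C : Subgroup Γ) : Prop :=
  IsConvexSubgroup C ∧ IsConradianOn C ∧
  ∀ K : Subgroup Γ, IsConvexSubgroup K → IsConradianOn K → K ≤ C

set_option linter.unusedSectionVars false
namespace ConradAux

variable {Γ : Type*} [Group Γ] [LinearOrder Γ] [CovariantClass Γ Γ (· * ·) (· ≤ ·)]

section Defs
variable (C : Subgroup Γ)

def PosS : Set Γ := {x | 1 < x ∧ x ∉ C}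
def NegS : Set Γ := {x | x < 1 ∧ x ∉ C}
def Req (y z : Γ) : Prop := ∃ c ∈ C, y ≤ z * c
def Uf (f : Γ) : Set Γ :=
  {z | z ∈ PosS C ∧ ∀ y ∈ PosS C, Req C y z → y⁻¹ * f * y ∈ PosS C}

end Defs

lemma mem_PosS {C : Subgroup Γ} {x : Γ} : x ∈ PosS C ↔ 1 < x ∧ x ∉ C := Iff.rfl
lemma mem_NegS {C : Subgroup Γ} {x : Γ} : x ∈ NegS C ↔ x < 1 ∧ x ∉ C := Iff.rfl

lemma mul_lt_left (c : Γ) {a b : Γ} (h : a < b) : c * a < c * b :=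
  lt_of_le_of_ne (mul_le_mul_right h.le c) (fun e => h.ne (mul_left_cancel e))

variable {C : Subgroup Γ}

lemma pos_inv {x : Γ} (hx : x ∈ PosS C) : x⁻¹ ∈ NegS C := by
  refine ⟨?_, fun h => hx.2 (by simpa using C.inv_mem h)⟩
  have := mul_lt_left x⁻¹ hx.1
  simpa using this

lemma neg_inv {x : Γ} (hx : x ∈ NegS C) : x⁻¹ ∈ PosS C := by
  refine ⟨?_, fun h => hx.2 (by simpa using C.inv_mem h)⟩
  have := mul_lt_left x⁻¹ hx.1
  simpa using this

lemma tri (g : Γ) : g ∈ NegS C ∨ g ∈ (C : Set Γ) ∨ g ∈ PosS C := by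
  by_cases hg : g ∈ C
  · exact Or.inr (Or.inl hg)
  rcases lt_trichotomy g 1 with h | h | h
  · exact Or.inl ⟨h, hg⟩
  · exact absurd (h ▸ C.one_mem) hg
  · exact Or.inr (Or.inr ⟨h, hg⟩)

lemma pos_not_neg {x : Γ} (hx : x ∈ PosS C) : x ∉ NegS C :=
  fun h => absurd (hx.1.trans h.1) (lt_irrefl 1)

lemma neg_notC {x : Γ} (hx : x ∈ NegS C) : x ∉ (C : Set Γ) := hx.2
lemma pos_notC {x : Γ} (hx : x ∈ PosS C) : x ∉ (C : Set Γ) := hx.2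

section WithConv

lemma pos_gt (hconv : IsConvexSubgroup C) (hx : x ∈ PosS C) {c : Γ} (hc : c ∈ C) : c < x := by
  by_contra h
  push_neg at h
  rcases eq_or_lt_of_le h with h' | h'
  · exact hx.2 (h' ▸ hc)
  · exact hx.2 (hconv 1 C.one_mem c hc x hx.1 h')

lemma neg_lt (hconv : IsConvexSubgroup C) (hx : x ∈ NegS C) {c : Γ} (hc : c ∈ C) : x < c := by
  by_contra h
  push_neg at h
  rcases eq_or_lt_of_le h with h' | h'
  · exact hx.2 (h' ▸ hc)
  · exact hx.2 (hconv c hc 1 C.one_mem x h' hx.1)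

lemma pos_of_gt {x : Γ} (h : ∀ c ∈ C, c < x) : x ∈ PosS C :=
  ⟨h 1 C.one_mem, fun hx => lt_irrefl x (h x hx)⟩

lemma neg_of_lt {x : Γ} (h : ∀ c ∈ C, x < c) : x ∈ NegS C :=
  ⟨h 1 C.one_mem, fun hx => lt_irrefl x (h x hx)⟩

-- products
lemma CP (hconv : IsConvexSubgroup C) {c x : Γ} (hc : c ∈ C) (hx : x ∈ PosS C) : c * x ∈ PosS C := by
  refine ⟨?_, fun h => hx.2 (by simpa using C.mul_mem (C.inv_mem hc) h)⟩
  have h1 : c⁻¹ < x := pos_gt hconv hx (C.inv_mem hc)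
  have := mul_lt_left c h1
  simpa using this

lemma PC (hconv : IsConvexSubgroup C) {x c : Γ} (hx : x ∈ PosS C) (hc : c ∈ C) : x * c ∈ PosS C := by
  refine ⟨?_, fun h => hx.2 (by simpa using C.mul_mem h (C.inv_mem hc))⟩
  have h1 : x⁻¹ < c := neg_lt hconv (pos_inv hx) hc
  have := mul_lt_left x h1
  simpa using this

lemma PP (hconv : IsConvexSubgroup C) {x y : Γ} (hx : x ∈ PosS C) (hy : y ∈ PosS C) : x * y ∈ PosS C := by
  have hxy : x < x * y := by simpa using mul_lt_left x hy.1
  refine pos_of_gt ?_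
  intro c hc
  exact (pos_gt hconv hx hc).trans hxy

lemma CN (hconv : IsConvexSubgroup C) {c x : Γ} (hc : c ∈ C) (hx : x ∈ NegS C) : c * x ∈ NegS C := by
  refine ⟨?_, fun h => hx.2 (by simpa using C.mul_mem (C.inv_mem hc) h)⟩
  have h1 : x < c⁻¹ := neg_lt hconv hx (C.inv_mem hc)
  have := mul_lt_left c h1
  simpa using this

lemma NC (hconv : IsConvexSubgroup C) {x c : Γ} (hx : x ∈ NegS C) (hc : c ∈ C) : x * c ∈ NegS C := by
  refine ⟨?_, fun h => hx.2 (by simpa using C.mul_mem h (C.inv_mem hc))⟩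
  have h1 : c < x⁻¹ := pos_gt hconv (neg_inv hx) hc
  have := mul_lt_left x h1
  simpa using this

lemma NN (hconv : IsConvexSubgroup C) {x y : Γ} (hx : x ∈ NegS C) (hy : y ∈ NegS C) : x * y ∈ NegS C := by
  have hxy : x * y < x := by simpa using mul_lt_left x hy.1
  refine neg_of_lt ?_
  intro c hc
  exact hxy.trans (neg_lt hconv hx hc)

lemma posP (hconv : IsConvexSubgroup C) {x y : Γ} (hx : (1:Γ) ≤ x) (hy : y ∈ PosS C) : x * y ∈ PosS C := by
  rcases eq_or_lt_of_le hx with h | h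
  · simpa [← h] using hy
  · by_cases hxC : x ∈ C
    · exact CP hconv hxC hy
    · exact PP hconv ⟨h, hxC⟩ hy

end WithConv

end ConradAux

namespace ConradAux2
open ConradAux

variable {Γ : Type*} [Group Γ] [LinearOrder Γ] [CovariantClass Γ Γ (· * ·) (· ≤ ·)]
variable {C : Subgroup Γ}

lemma req_refl (y : Γ) : Req C y y := ⟨1, C.one_mem, by simp⟩

lemma req_of_le {y z : Γ} (h : y ≤ z) : Req C y z := ⟨1, C.one_mem, by simpa using h⟩

lemma le_of_left {a b c : Γ} (h : a ≤ b) : c * a ≤ c * b := mul_le_mul_right h c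

lemma not_req_pos {y z : Γ} (h : ¬ Req C y z) : z⁻¹ * y ∈ PosS C := by
  refine pos_of_gt ?_
  intro c hc
  have h1 : ¬ (y ≤ z * c) := fun hle => h ⟨c, hc, hle⟩
  have h2 : z * c < y := not_le.1 h1
  have := mul_lt_left z⁻¹ h2
  simpa [mul_assoc] using this

lemma req_total {y z : Γ} (h : ¬ Req C y z) : Req C z y := by
  have h1 : ¬ (y ≤ z * 1) := fun hle => h ⟨1, C.one_mem, hle⟩
  have h2 : z < y := by simpa using not_le.1 h1
  exact req_of_le h2.le

lemma req_trans (hconv : IsConvexSubgroup C) {y' y z : Γ}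
    (h1 : Req C y' y) (h2 : Req C y z) : Req C y' z := by
  by_contra h
  obtain ⟨c'', hc'', hle1⟩ := h1
  obtain ⟨c0, hc0, hle2⟩ := h2
  have hzy : z⁻¹ * y ≤ c0 := by
    have := le_of_left (c := z⁻¹) hle2
    simpa [mul_assoc] using this
  have hzyNotPosS : z⁻¹ * y ∉ PosS C := by
    intro hp
    exact absurd hzy (not_le.2 (pos_gt hconv hp hc0))
  have hbig : z⁻¹ * y * c'' ∈ PosS C := by
    refine pos_of_gt ?_
    intro c hc
    have h1' : ¬ (y' ≤ z * c) := fun hle => h ⟨c, hc, hle⟩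
    have h2' : z * c < y' := not_le.1 h1'
    have h3 : z * c < y * c'' := lt_of_lt_of_le h2' hle1
    have := mul_lt_left z⁻¹ h3
    simpa [mul_assoc] using this
  rcases tri (C := C) (z⁻¹ * y) with hn | hcm | hp
  · exact pos_not_neg hbig (NC hconv hn hc'')
  · exact hbig.2 (C.mul_mem hcm hc'')
  · exact hzyNotPosS hp

lemma Uf_pos {f z : Γ} (hz : z ∈ Uf C f) : z ∈ PosS C := hz.1

lemma Uf_down (hconv : IsConvexSubgroup C) {f y z : Γ} (hy : y ∈ PosS C)
    (hreq : Req C y z) (hz : z ∈ Uf C f) : y ∈ Uf C f :=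
  ⟨hy, fun y' hy' hreq' => hz.2 y' hy' (req_trans hconv hreq' hreq)⟩

lemma Uf_self (hconv : IsConvexSubgroup C) {f : Γ} (hf : f ∈ PosS C) : f ∈ Uf C f := by
  refine ⟨hf, ?_⟩
  intro y hy hreq
  obtain ⟨c, hc, hle⟩ := hreq
  have hr : (1:Γ) ≤ y⁻¹ * (f * c) := by
    have := le_of_left (c := y⁻¹) hle
    simpa [mul_assoc] using this
  have key : y⁻¹ * f * y = (y⁻¹ * (f * c)) * (c⁻¹ * y) := by group
  rw [key]
  exact posP hconv hr (CP hconv (C.inv_mem hc) hy)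

lemma Uf_chain (hconv : IsConvexSubgroup C) (f g : Γ) :
    Uf C f ⊆ Uf C g ∨ Uf C g ⊆ Uf C f := by
  by_cases hsub : Uf C f ⊆ Uf C g
  · exact Or.inl hsub
  · right
    rw [Set.not_subset] at hsub
    obtain ⟨a, haf, hag⟩ := hsub
    intro b hb
    by_cases hab : Req C a b
    · exact absurd (Uf_down hconv (Uf_pos haf) hab hb) hag
    · exact Uf_down hconv (Uf_pos hb) (req_total hab) haf

lemma exists_argmin (hconv : IsConvexSubgroup C) (s : Finset Γ) (hs : s.Nonempty) :
    ∃ f₀ ∈ s, ∀ f ∈ s, Uf C f₀ ⊆ Uf C f := by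
  classical
  induction s using Finset.cons_induction with
  | empty => exact absurd hs (by simp)
  | cons a t hat ih =>
    rcases t.eq_empty_or_nonempty with rfl | ht
    · exact ⟨a, by simp, by simp⟩
    · obtain ⟨f₀, hf₀t, hmin⟩ := ih ht
      rcases Uf_chain (C := C) hconv a f₀ with hc | hc
      · refine ⟨a, by simp, ?_⟩
        intro f hf
        rcases Finset.mem_cons.1 hf with rfl | hf
        · exact subset_rfl
        · exact hc.trans (hmin f hf)
      · refine ⟨f₀, Finset.mem_cons_of_mem hf₀t, ?_⟩
        intro f hf
        rcases Finset.mem_cons.1 hf with rfl | hf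
        · exact hc
        · exact hmin f hf

/-- key step: the region `Uf f₀` is stable under left multiplication by `f₀`. -/
lemma key_step (hconv : IsConvexSubgroup C) {f₀ s : Γ} (hf₀ : f₀ ∈ PosS C)
    (hf₀U : f₀ ∈ Uf C f₀) (hs : s ∈ Uf C f₀) : f₀ * s ∈ Uf C f₀ := by
  refine ⟨PP hconv hf₀ (Uf_pos hs), ?_⟩
  intro y hy hreq
  by_contra hcon
  rcases tri (C := C) (f₀⁻¹ * y) with hn | hcm | hp
  · -- y ≤ f₀ * 1
    have h1 : f₀⁻¹ * y < 1 := hn.1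
    have h2 : y < f₀ := by
      have := mul_lt_left f₀ h1
      simpa [mul_assoc] using this
    have hyU : y ∈ Uf C f₀ := Uf_down hconv hy (req_of_le h2.le) hf₀U
    exact hcon (hyU.2 y hy (req_refl y))
  · have h2 : y ≤ f₀ * (f₀⁻¹ * y) := by simp [mul_assoc]
    have hyU : y ∈ Uf C f₀ := Uf_down hconv hy ⟨f₀⁻¹ * y, hcm, h2⟩ hf₀U
    exact hcon (hyU.2 y hy (req_refl y))
  · -- y₄ := f₀⁻¹ * y ∈ Pos
    obtain ⟨c, hc, hle⟩ := hreq
    have h4 : f₀⁻¹ * y ≤ s * c := by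
      have := le_of_left (c := f₀⁻¹) hle
      simpa [mul_assoc] using this
    have hy4U : f₀⁻¹ * y ∈ PosS C := hp
    have := hs.2 (f₀⁻¹ * y) hp ⟨c, hc, h4⟩
    have hiden : (f₀⁻¹ * y)⁻¹ * f₀ * (f₀⁻¹ * y) = y⁻¹ * f₀ * y := by group
    rw [hiden] at this
    exact hcon this

end ConradAux2

namespace ConradAux3
open ConradAux ConradAux2

variable {Γ : Type*} [Group Γ] [LinearOrder Γ] [CovariantClass Γ Γ (· * ·) (· ≤ ·)]
variable {C : Subgroup Γ}

/-- LEMMA W: from a witness pair of non-Conradianity, `B ∈ PosS C` and there is a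
flip at `B`. -/
lemma flip_of_witness (hconv : IsConvexSubgroup C) (hcon : IsConradianOn C)
    {A B : Γ} (hA : 1 < A) (hB : 1 < B) (hw : ∀ n : ℕ, 0 < n → A * B ^ n ≤ B) :
    B ∈ PosS C ∧ ∃ x ∈ PosS C, B⁻¹ * x * B ∈ NegS C := by
  -- step 1 : B ∉ C
  have hAB : A * B ≤ B := by simpa using hw 1 (by norm_num)
  have hABne : A * B ≠ B := by
    intro h
    have : A = 1 := by
      have := mul_right_cancel (b := B) (by simpa using h)
      simpa using this
    exact absurd this hA.ne'
  have hABlt : A * B < B := lt_of_le_of_ne hAB hABne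
  have h1AB : (1:Γ) < A * B := by
    have : A < A * B := by simpa using mul_lt_left A hB
    exact hA.trans this
  have hBC : B ∉ C := by
    intro hBC
    have hABC : A * B ∈ C := hconv 1 C.one_mem B hBC (A * B) h1AB hABlt
    have hAC : A ∈ C := by
      have := C.mul_mem hABC (C.inv_mem hBC)
      simpa [mul_assoc] using this
    obtain ⟨n, hn, hlt⟩ := hcon A hAC B hBC hA hB
    exact absurd hlt (not_lt.2 (hw n hn))
  have hBpos : B ∈ PosS C := ⟨hB, hBC⟩
  -- step 2 : τ := B⁻¹ A B, τ * B ≤ 1, τ ∈ NegS C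
  set τ := B⁻¹ * A * B with hτdef
  have hAB2 : A * (B * B) ≤ B := by
    have := hw 2 (by norm_num)
    simpa [pow_two, mul_assoc] using this
  have hτB : τ * B ≤ 1 := by
    have := le_of_left (c := B⁻¹) hAB2
    calc τ * B = B⁻¹ * (A * (B * B)) := by rw [hτdef]; group
    _ ≤ B⁻¹ * B := this
    _ = 1 := by simp
  have hBτinv : B ≤ τ⁻¹ := by
    have := le_of_left (c := τ⁻¹) hτB
    simpa [mul_assoc] using this
  have hτinvPosS : τ⁻¹ ∈ PosS C := by
    refine pos_of_gt ?_
    intro c hc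
    exact lt_of_lt_of_le (pos_gt hconv hBpos hc) hBτinv
  have hτNegS : τ ∈ NegS C := by simpa using pos_inv hτinvPosS
  refine ⟨hBpos, ?_⟩
  by_cases hAC : A ∈ C
  · -- A ∈ C : use A*B or A*A*B
    by_cases hτBC : τ * B ∈ C
    · -- x := A * (A * B)
      refine ⟨A * (A * B), ?_, ?_⟩
      · exact CP hconv hAC (CP hconv hAC hBpos)
      · have hiden : B⁻¹ * (A * (A * B)) * B = τ * (τ * B) := by rw [hτdef]; group
        rw [hiden]
        exact NC hconv hτNegS hτBC
    · -- x := A * B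
      refine ⟨A * B, CP hconv hAC hBpos, ?_⟩
      have hiden : B⁻¹ * (A * B) * B = τ * B := by rw [hτdef]; group
      rw [hiden]
      have hτBlt : τ * B < 1 := by
        rcases eq_or_lt_of_le hτB with h | h
        · exact absurd (h ▸ C.one_mem : τ * B ∈ C) hτBC
        · exact h
      exact ⟨hτBlt, hτBC⟩
  · -- A ∉ C : x := A
    refine ⟨A, ⟨hA, hAC⟩, ?_⟩
    simpa [hτdef] using hτNegS

end ConradAux3

namespace ConradAux4
open ConradAux ConradAux2 ConradAux3

variable {Γ : Type*} [Group Γ] [LinearOrder Γ] [CovariantClass Γ Γ (· * ·) (· ≤ ·)]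
variable {C : Subgroup Γ}

lemma subE_case (hconv : IsConvexSubgroup C) (hcon : IsConradianOn C)
    (hmax : ∀ K : Subgroup Γ, IsConvexSubgroup K → IsConradianOn K → K ≤ C)
    {f₀ z g : Γ} (hz : z ∈ Uf C f₀)
    (hHARD : ∀ z' ∈ Uf C f₀, ∀ x ∈ PosS C, ¬ (z'⁻¹ * x * z' ∈ NegS C))
    (hg : g ∈ C) (hgz : z⁻¹ * g * z ∈ NegS C) : False := by
  classical
  have hzP : z ∈ PosS C := Uf_pos hz
  -- (m1) : no conjugate z c z⁻¹ is in PosS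
  have hm1 : ∀ c ∈ C, z * c * z⁻¹ ∉ PosS C := by
    intro c hc hP
    have hxP : z * c * z⁻¹ * g ∈ PosS C := PC hconv hP hg
    have hiden : z⁻¹ * (z * c * z⁻¹ * g) * z = c * (z⁻¹ * g * z) := by group
    have : z⁻¹ * (z * c * z⁻¹ * g) * z ∈ NegS C := by
      rw [hiden]; exact CN hconv hc hgz
    exact hHARD z hz _ hxP this
  -- (m1') : z C z⁻¹ ⊆ C
  have hψC : ∀ c ∈ C, z * c * z⁻¹ ∈ C := by
    intro c hc
    rcases tri (C := C) (z * c * z⁻¹) with hn | hcm | hp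
    · exfalso
      have : (z * c * z⁻¹)⁻¹ ∈ PosS C := neg_inv hn
      have hiden : (z * c * z⁻¹)⁻¹ = z * c⁻¹ * z⁻¹ := by group
      rw [hiden] at this
      exact hm1 c⁻¹ (C.inv_mem hc) this
    · exact hcm
    · exact absurd hp (hm1 c hc)
  -- (m2) : conjugation by z⁻¹ preserves PosS
  have hφP : ∀ x ∈ PosS C, z⁻¹ * x * z ∈ PosS C := by
    intro x hx
    rcases tri (C := C) (z⁻¹ * x * z) with hn | hcm | hp
    · exact absurd hn (hHARD z hz x hx)
    · exfalso
      have h1 : z * (z⁻¹ * x * z) * z⁻¹ ∈ C := hψC _ hcm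
      have hiden : z * (z⁻¹ * x * z) * z⁻¹ = x := by group
      rw [hiden] at h1
      exact hx.2 h1
    · exact hp
  have hφN : ∀ x ∈ NegS C, z⁻¹ * x * z ∈ NegS C := by
    intro x hx
    have h1 : z⁻¹ * x⁻¹ * z ∈ PosS C := hφP _ (neg_inv hx)
    have hiden : (z⁻¹ * x * z)⁻¹ = z⁻¹ * x⁻¹ * z := by group
    have := pos_inv (C := C) (by rw [← hiden] at h1; exact h1)
    simpa using this
  -- ψ preserves C ∪ PosS
  have hψCP : ∀ v : Γ, (v ∈ C ∨ v ∈ PosS C) → (z * v * z⁻¹ ∈ C ∨ z * v * z⁻¹ ∈ PosS C) := by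
    intro v hv
    rcases hv with hv | hv
    · exact Or.inl (hψC v hv)
    rcases tri (C := C) (z * v * z⁻¹) with hn | hcm | hp
    · exfalso
      have h1 : z⁻¹ * (z * v * z⁻¹) * z ∈ NegS C := hφN _ hn
      have hiden : z⁻¹ * (z * v * z⁻¹) * z = v := by group
      rw [hiden] at h1
      exact pos_not_neg hv h1
    · exact Or.inl hcm
    · exact Or.inr hp
  -- iterated conjugation facts
  have hstep : ∀ x : Γ, ∀ k : ℕ, z ^ k * x * (z ^ k)⁻¹ ∈ C →
      z ^ (k+1) * x * (z ^ (k+1))⁻¹ ∈ C := by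
    intro x k hk
    have hiden : z ^ (k+1) * x * (z ^ (k+1))⁻¹
        = z * (z ^ k * x * (z ^ k)⁻¹) * z⁻¹ := by
      rw [pow_succ']; group
    rw [hiden]
    exact hψC _ hk
  have hmono : ∀ x : Γ, ∀ j k : ℕ, j ≤ k → z ^ j * x * (z ^ j)⁻¹ ∈ C →
      z ^ k * x * (z ^ k)⁻¹ ∈ C := by
    intro x j k hjk hj
    induction k with
    | zero => simpa [Nat.le_zero.1 hjk] using hj
    | succ n ih =>
      rcases Nat.lt_or_ge j (n+1) with h | h
      · exact hstep x n (ih (Nat.lt_succ_iff.1 h))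
      · have : j = n + 1 := le_antisymm hjk h
        simpa [this] using hj
  -- the subgroup T
  let T : Subgroup Γ :=
    { carrier := {x | ∃ k : ℕ, z ^ k * x * (z ^ k)⁻¹ ∈ C}
      one_mem' := ⟨0, by simpa using C.one_mem⟩
      mul_mem' := by
        rintro a b ⟨k₁, h1⟩ ⟨k₂, h2⟩
        refine ⟨max k₁ k₂, ?_⟩
        have h1' := hmono a k₁ _ (le_max_left k₁ k₂) h1
        have h2' := hmono b k₂ _ (le_max_right k₁ k₂) h2
        have hiden : z ^ (max k₁ k₂) * (a * b) * (z ^ (max k₁ k₂))⁻¹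
            = (z ^ (max k₁ k₂) * a * (z ^ (max k₁ k₂))⁻¹)
              * (z ^ (max k₁ k₂) * b * (z ^ (max k₁ k₂))⁻¹) := by group
        rw [hiden]
        exact C.mul_mem h1' h2'
      inv_mem' := by
        rintro a ⟨k, hk⟩
        refine ⟨k, ?_⟩
        have hiden : z ^ k * a⁻¹ * (z ^ k)⁻¹ = (z ^ k * a * (z ^ k)⁻¹)⁻¹ := by group
        rw [hiden]
        exact C.inv_mem hk }
  have hmemT : ∀ x : Γ, x ∈ T ↔ ∃ k : ℕ, z ^ k * x * (z ^ k)⁻¹ ∈ C := fun x => Iff.rfl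
  -- iterated preservation of C ∪ PosS
  have hCPiter : ∀ x : Γ, (x ∈ C ∨ x ∈ PosS C) → ∀ k : ℕ,
      (z ^ k * x * (z ^ k)⁻¹ ∈ C ∨ z ^ k * x * (z ^ k)⁻¹ ∈ PosS C) := by
    intro x hx k
    induction k with
    | zero => simpa using hx
    | succ n ih =>
      have hiden : z ^ (n+1) * x * (z ^ (n+1))⁻¹
          = z * (z ^ n * x * (z ^ n)⁻¹) * z⁻¹ := by rw [pow_succ']; group
      rw [hiden]
      exact hψCP _ ih
  -- core convexity claim
  have hcore : ∀ x w : Γ, 1 ≤ x → x ≤ w → w ∈ T → x ∈ T := by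
    intro x w hx1 hxw hwT
    obtain ⟨K, hwK⟩ := hwT
    rcases eq_or_lt_of_le hx1 with h | h
    · exact h ▸ T.one_mem
    by_cases hxC : x ∈ C
    · exact ⟨0, by simpa using hxC⟩
    have hxP : x ∈ PosS C := ⟨h, hxC⟩
    rcases hCPiter x (Or.inr hxP) K with hK | hK
    · exact ⟨K, hK⟩
    exfalso
    rcases eq_or_lt_of_le hxw with h' | h'
    · rw [h'] at hK
      exact hK.2 hwK
    have hr1 : (1:Γ) < x⁻¹ * w := by
      have := mul_lt_left x⁻¹ h'
      simpa using this
    have hrCP : x⁻¹ * w ∈ C ∨ x⁻¹ * w ∈ PosS C := by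
      rcases tri (C := C) (x⁻¹ * w) with hn | hcm | hp
      · exact absurd (hr1.trans hn.1) (lt_irrefl 1)
      · exact Or.inl hcm
      · exact Or.inr hp
    have hiter := hCPiter _ hrCP K
    have hiden : z ^ K * (x⁻¹ * w) * (z ^ K)⁻¹
        = (z ^ K * x * (z ^ K)⁻¹)⁻¹ * (z ^ K * w * (z ^ K)⁻¹) := by group
    rw [hiden] at hiter
    have hNeg : (z ^ K * x * (z ^ K)⁻¹)⁻¹ * (z ^ K * w * (z ^ K)⁻¹) ∈ NegS C :=
      NC hconv (pos_inv hK) hwK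
    rcases hiter with hc | hp
    · exact hNeg.2 hc
    · exact pos_not_neg hp hNeg
  -- T is convex
  have hTconv : IsConvexSubgroup T := by
    intro c₁ h1 c₂ h2 f hf1 hf2
    have hx1 : (1:Γ) ≤ c₁⁻¹ * f := by
      have := mul_lt_left c₁⁻¹ hf1
      simpa using this.le
    have hx2 : c₁⁻¹ * f ≤ c₁⁻¹ * c₂ := le_of_left hf2.le
    have hmem : c₁⁻¹ * f ∈ T := hcore _ _ hx1 hx2 (T.mul_mem (T.inv_mem h1) h2)
    have : c₁ * (c₁⁻¹ * f) ∈ T := T.mul_mem h1 hmem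
    simpa [mul_assoc] using this
  -- τ ∈ T \ C
  have hτT : z⁻¹ * g * z ∈ T := by
    refine ⟨1, ?_⟩
    have hiden : z ^ 1 * (z⁻¹ * g * z) * (z ^ 1)⁻¹ = g := by
      simp only [pow_one]; group
    rw [hiden]; exact hg
  -- T is not Conradian on
  have hTnotCon : ¬ IsConradianOn T := by
    intro hTcon
    exact hgz.2 (hmax T hTconv hTcon hτT)
  -- extract witness pair
  rw [IsConradianOn] at hTnotCon
  push_neg at hTnotCon
  obtain ⟨A, hAT, B, hBT, hA1, hB1, hw⟩ := hTnotCon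
  have hw' : ∀ n : ℕ, 0 < n → A * B ^ n ≤ B := by
    intro n hn
    exact hw n hn
  obtain ⟨hBpos, x, hxP, hflip⟩ := flip_of_witness hconv hcon hA1 hB1 hw'
  -- z ∉ T
  have hzT : z ∉ T := by
    rintro ⟨k, hk⟩
    have hiden : z ^ k * z * (z ^ k)⁻¹ = z := by group
    rw [hiden] at hk
    exact hzP.2 hk
  -- B < z
  have hBz : B < z := by
    by_contra hle
    push_neg at hle
    exact hzT (hcore z B hzP.1.le hle hBT)
  have hBU : B ∈ Uf C f₀ := Uf_down hconv hBpos (req_of_le hBz.le) hz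
  exact hHARD B hBU x hxP hflip

end ConradAux4

namespace ConradAux5
open ConradAux ConradAux2 ConradAux3

variable {Γ : Type*} [Group Γ] [LinearOrder Γ] [CovariantClass Γ Γ (· * ·) (· ≤ ·)]
variable {C : Subgroup Γ}

lemma subNone_case (hconv : IsConvexSubgroup C) (hcon : IsConradianOn C)
    (hmax : ∀ K : Subgroup Γ, IsConvexSubgroup K → IsConradianOn K → K ≤ C)
    {f₀ : Γ} (hf₀P : f₀ ∈ PosS C) (hf₀U : f₀ ∈ Uf C f₀)
    (hHARD : ∀ z' ∈ Uf C f₀, ∀ x ∈ PosS C, ¬ (z'⁻¹ * x * z' ∈ NegS C))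
    (hCL : ∀ z ∈ Uf C f₀, ∀ γ : Γ, ((1:Γ) ≤ γ ∨ γ ∈ C) → ¬ (z⁻¹ * γ * z ∈ NegS C)) :
    False := by
  classical
  set Uh : Set Γ := NegS C ∪ ((C : Set Γ) ∪ Uf C f₀) with hUhdef
  have hU1 : (1:Γ) ∈ Uh := Or.inr (Or.inl C.one_mem)
  have hUdown : ∀ y u : Γ, y ≤ u → u ∈ Uh → y ∈ Uh := by
    intro y u hyu hu
    rcases tri (C := C) y with hy | hy | hy
    · exact Or.inl hy
    · exact Or.inr (Or.inl hy)
    rcases hu with hu | hu | hu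
    · exact absurd (hy.1.trans_le (hyu.trans hu.1.le)) (lt_irrefl 1)
    · exact absurd hyu (not_le.2 (pos_gt hconv hy hu))
    · exact Or.inr (Or.inr (Uf_down hconv hy (req_of_le hyu) hu))
  have hUsat : ∀ u ∈ Uh, ∀ c ∈ C, u * c ∈ Uh := by
    intro u hu c hc
    rcases hu with hu | hu | hu
    · exact Or.inl (NC hconv hu hc)
    · exact Or.inr (Or.inl (C.mul_mem hu hc))
    · refine Or.inr (Or.inr ⟨PC hconv (Uf_pos hu) hc, ?_⟩)
      intro y hy hreq
      obtain ⟨c', hc', hle⟩ := hreq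
      exact hu.2 y hy ⟨c * c', C.mul_mem hc hc', by simpa [mul_assoc] using hle⟩
  -- the cut action
  set op : Γ → Set Γ → Set Γ := fun γ S => {y | ∃ s ∈ S, y ≤ γ * s} with hopdef
  have hopmono : ∀ γ : Γ, ∀ S S' : Set Γ, S ⊆ S' → op γ S ⊆ op γ S' := by
    rintro γ S S' hss y ⟨s, hs, hle⟩
    exact ⟨s, hss hs, hle⟩
  have hopop : ∀ a b : Γ, ∀ S : Set Γ, op a (op b S) = op (a * b) S := by
    intro a b S
    ext y
    constructor
    · rintro ⟨s', ⟨s, hs, hle'⟩, hle⟩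
      refine ⟨s, hs, ?_⟩
      calc y ≤ a * s' := hle
      _ ≤ a * (b * s) := le_of_left hle'
      _ = a * b * s := by rw [mul_assoc]
    · rintro ⟨s, hs, hle⟩
      exact ⟨b * s, ⟨s, hs, le_refl _⟩, by simpa [mul_assoc] using hle⟩
  have hopone : op 1 Uh = Uh := by
    ext y
    constructor
    · rintro ⟨s, hs, hle⟩
      exact hUdown y s (by simpa using hle) hs
    · intro hy
      exact ⟨y, hy, by simp⟩
  -- (q1)
  have hUcase : ∀ γ : Γ, ((1:Γ) ≤ γ ∨ γ ∈ C) → ∀ u ∈ Uf C f₀, ∃ s ∈ Uh, u ≤ γ * s := by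
    intro γ hγ u hu
    have h1 := hCL u hu γ hγ
    rcases tri (C := C) (u⁻¹ * γ * u) with hn | hcm | hp
    · exact absurd hn h1
    · refine ⟨u * (u⁻¹ * γ * u)⁻¹, hUsat u (Or.inr (Or.inr hu)) _ (C.inv_mem hcm), ?_⟩
      have hiden : γ * (u * (u⁻¹ * γ * u)⁻¹) = u := by group
      rw [hiden]
    · refine ⟨u, Or.inr (Or.inr hu), ?_⟩
      have := mul_lt_left u hp.1
      have hiden : u * (u⁻¹ * γ * u) = γ * u := by group
      rw [hiden] at this
      simpa using this.le
  have hq1 : ∀ γ : Γ, ((1:Γ) ≤ γ ∨ γ ∈ C) → Uh ⊆ op γ Uh := by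
    intro γ hγ u hu
    by_cases hγC : γ ∈ C
    · rcases hu with hu | hu | hu
      · refine ⟨γ⁻¹ * u, Or.inl (CN hconv (C.inv_mem hγC) hu), ?_⟩
        simp [mul_assoc]
      · refine ⟨γ⁻¹ * u, Or.inr (Or.inl (C.mul_mem (C.inv_mem hγC) hu)), ?_⟩
        simp [mul_assoc]
      · obtain ⟨s, hs, hle⟩ := hUcase γ (Or.inr hγC) u hu
        exact ⟨s, hs, hle⟩
    · have h1γ : (1:Γ) ≤ γ := by
        rcases hγ with h | h
        · exact h
        · exact absurd h hγC
      rcases eq_or_lt_of_le h1γ with h | h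
      · exact ⟨u, hu, by simp [← h]⟩
      have hγP : γ ∈ PosS C := ⟨h, hγC⟩
      rcases hu with hu | hu | hu
      · exact ⟨1, hU1, by simpa using (hu.1.trans h).le⟩
      · exact ⟨1, hU1, by simpa using (pos_gt hconv hγP hu).le⟩
      · obtain ⟨s, hs, hle⟩ := hUcase γ (Or.inl h1γ) u hu
        exact ⟨s, hs, hle⟩
  -- score : convexity core
  have hscore : ∀ x w : Γ, 1 ≤ x → x ≤ w → op w Uh = Uh → op x Uh = Uh := by
    intro x w hx1 hxw hw
    refine le_antisymm ?_ (hq1 x (Or.inl hx1))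
    have hv : (1:Γ) ≤ x⁻¹ * w := by
      have := le_of_left (c := x⁻¹) hxw
      simpa using this
    have h2 : op x Uh ⊆ op x (op (x⁻¹ * w) Uh) :=
      hopmono x _ _ (hq1 (x⁻¹ * w) (Or.inl hv))
    have h3 : op x (op (x⁻¹ * w) Uh) = op w Uh := by
      rw [hopop]
      group
    intro y hy
    rw [← hw]
    exact h3 ▸ (h2 hy)
  -- the stabilizer subgroup
  let ST : Subgroup Γ :=
    { carrier := {γ | op γ Uh = Uh}
      one_mem' := hopone
      mul_mem' := by
        intro a b ha hb
        show op (a * b) Uh = Uh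
        rw [← hopop, hb, ha]
      inv_mem' := by
        intro a ha
        show op a⁻¹ Uh = Uh
        have : op a⁻¹ (op a Uh) = op 1 Uh := by
          rw [hopop]; group
        rw [← ha]
        rw [this, hopone, ha]
      }
  have hSTconv : IsConvexSubgroup ST := by
    intro c₁ h1 c₂ h2 f hf1 hf2
    have hx1 : (1:Γ) ≤ c₁⁻¹ * f := by
      have := mul_lt_left c₁⁻¹ hf1
      simpa using this.le
    have hx2 : c₁⁻¹ * f ≤ c₁⁻¹ * c₂ := le_of_left hf2.le
    have hmem : c₁⁻¹ * f ∈ ST :=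
      hscore _ _ hx1 hx2 (ST.mul_mem (ST.inv_mem h1) h2)
    have : c₁ * (c₁⁻¹ * f) ∈ ST := ST.mul_mem h1 hmem
    simpa [mul_assoc] using this
  -- f₀ ∈ ST
  have hf₀ST : f₀ ∈ ST := by
    show op f₀ Uh = Uh
    refine le_antisymm ?_ (hq1 f₀ (Or.inl hf₀P.1.le))
    rintro y ⟨s, hs, hle⟩
    rcases tri (C := C) y with hy | hy | hy
    · exact Or.inl hy
    · exact Or.inr (Or.inl hy)
    rcases hs with hs | hs | hs
    · have h2 : y ≤ f₀ := by
        have := le_of_left (c := f₀) hs.1.le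
        rw [mul_one] at this
        exact hle.trans this
      exact Or.inr (Or.inr (Uf_down hconv hy (req_of_le h2) hf₀U))
    · exact Or.inr (Or.inr (Uf_down hconv hy ⟨s, hs, hle⟩ hf₀U))
    · have hkey : f₀ * s ∈ Uf C f₀ := key_step hconv hf₀P hf₀U hs
      exact Or.inr (Or.inr (Uf_down hconv hy (req_of_le hle) hkey))
  -- ST is not Conradian
  have hSTnotCon : ¬ IsConradianOn ST := by
    intro hSTcon
    exact hf₀P.2 (hmax ST hSTconv hSTcon hf₀ST)
  rw [IsConradianOn] at hSTnotCon
  push_neg at hSTnotCon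
  obtain ⟨A, hAT, B, hBT, hA1, hB1, hw⟩ := hSTnotCon
  obtain ⟨hBpos, x, hxP, hflip⟩ := flip_of_witness hconv hcon hA1 hB1 hw
  have hBUh : B ∈ Uh := by
    have h1 : B ∈ op B Uh := ⟨1, hU1, by simp⟩
    have h2 : op B Uh = Uh := hBT
    rw [h2] at h1
    exact h1
  have hBU : B ∈ Uf C f₀ := by
    rcases hBUh with h | h | h
    · exact absurd h (pos_not_neg hBpos)
    · exact absurd h hBpos.2
    · exact h
  exact hHARD B hBU x hxP hflip

end ConradAux5


open ConradAux ConradAux2 ConradAux3 ConradAux4 ConradAux5 in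
/-- If the ordering is not Conradian and `C` is the Conradian soul, then for every
finite family `F` of positive elements there exist `h ∈ Γ` and `h̄ > 1` with
`h̄ ∉ C` such that `1 < h⁻¹ f h ∉ C` for all `f ∈ F \ C`, while
`1 > h⁻¹ h̄ h ∉ C`. -/
theorem exists_conjugator (Γ : Type*) [Group Γ] [LinearOrder Γ]
    [CovariantClass Γ Γ (· * ·) (· ≤ ·)]
    (hnc : ¬ IsConradian Γ) (C : Subgroup Γ) (hC : IsConradianSoul C)
    (F : Finset Γ) (hF : ∀ f ∈ F, 1 < f) :
    ∃ h hbar : Γ, 1 < hbar ∧ hbar ∉ C ∧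
      (∀ f ∈ F, f ∉ C → 1 < h⁻¹ * f * h ∧ h⁻¹ * f * h ∉ C) ∧
      h⁻¹ * hbar * h < 1 ∧ h⁻¹ * hbar * h ∉ C := by
  classical
  obtain ⟨hconv, hcon, hmax⟩ := hC
  by_cases hFC : ∀ f ∈ F, f ∈ C
  · -- trivial case : no condition on F, use any witness of non-Conradianity
    rw [IsConradian] at hnc
    push_neg at hnc
    obtain ⟨a, b, ha1, hb1, hab⟩ := hnc
    obtain ⟨hbpos, x, hxP, hflip⟩ := flip_of_witness hconv hcon ha1 hb1 hab
    refine ⟨b, x, hxP.1, hxP.2, ?_, hflip.1, hflip.2⟩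
    intro f hf hfC
    exact absurd (hFC f hf) hfC
  · push_neg at hFC
    set F' := F.filter (fun f => f ∉ C) with hF'def
    have hF'ne : F'.Nonempty := by
      obtain ⟨f, hf, hfC⟩ := hFC
      exact ⟨f, Finset.mem_filter.2 ⟨hf, hfC⟩⟩
    obtain ⟨f₀, hf₀F, hf₀min⟩ := exists_argmin hconv F' hF'ne
    have hf₀mem := Finset.mem_filter.1 hf₀F
    have hf₀P : f₀ ∈ PosS C := ⟨hF f₀ hf₀mem.1, hf₀mem.2⟩
    have hf₀U : f₀ ∈ Uf C f₀ := Uf_self hconv hf₀P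
    by_cases hgoal : ∃ z ∈ Uf C f₀, ∃ x ∈ PosS C, z⁻¹ * x * z ∈ NegS C
    · obtain ⟨z, hz, x, hxP, hflip⟩ := hgoal
      refine ⟨z, x, hxP.1, hxP.2, ?_, hflip.1, hflip.2⟩
      intro f hf hfC
      have hfF' : f ∈ F' := Finset.mem_filter.2 ⟨hf, hfC⟩
      have hzUf : z ∈ Uf C f := hf₀min f hfF' hz
      have hres := hzUf.2 z (Uf_pos hz) (req_refl z)
      exact ⟨hres.1, hres.2⟩
    · exfalso
      push_neg at hgoal
      have hHARD : ∀ z' ∈ Uf C f₀, ∀ x ∈ PosS C, ¬ (z'⁻¹ * x * z' ∈ NegS C) := hgoal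
      by_cases hsubE : ∃ z ∈ Uf C f₀, ∃ g ∈ C, z⁻¹ * g * z ∈ NegS C
      · obtain ⟨z, hz, g, hg, hgz⟩ := hsubE
        exact subE_case hconv hcon hmax hz hHARD hg hgz
      · push_neg at hsubE
        have hCL : ∀ z ∈ Uf C f₀, ∀ γ : Γ, ((1:Γ) ≤ γ ∨ γ ∈ C) →
            ¬ (z⁻¹ * γ * z ∈ NegS C) := by
          intro z hz γ hγ hmem
          by_cases hγC : γ ∈ C
          · exact hsubE z hz γ hγC hmem
          · have h1γ : (1:Γ) ≤ γ := hγ.resolve_right hγC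
            rcases eq_or_lt_of_le h1γ with h | h
            · rw [← h] at hmem
              have hone : z⁻¹ * 1 * z = 1 := by group
              rw [hone] at hmem
              exact absurd hmem.1 (lt_irrefl 1)
            · exact hHARD z hz γ ⟨h, hγC⟩ hmem
        exact subNone_case hconv hcon hmax hf₀P hf₀U hHARD hCL
end
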